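/- arXiv:0707.0861 — 4 statements merged into one kernel-verified Lean document; each statement's English description precedes it below -/
import Mathlib

section
/- Let (U_k^{(n)})_{k=1,...,d} be real-valued random variables on a sequence of probability spaces with measures P_0^n, such that for each k the sequence U_k^{(n)} converges in distribution (as n → ∞) to a chi-square distribution with k degrees of freedom. Let π(k,n) be penalties with π(1,n) < π(2,n) < ... < π(d,n) for all n, and π(j,n) - π(1,n) → ∞ as n → ∞ for every j = 2,...,d. Define the selection rule S_n = min{k : 1 ≤ k ≤ d, U_k^{(n)} - π(k,n) ≥ U_j^{(n)} - π(j,n) for all j = 1,...,d}. Then P_0^n(S_n > 1) → 0 as n → ∞. -/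
open MeasureTheory Filter

/-- The chi-square distribution with `k` degrees of freedom: the law of the squared
Euclidean norm of a standard `k`-dimensional Gaussian vector. -/
noncomputable def chiSq (k : ℕ) : Measure ℝ :=
  (Measure.pi fun _ : Fin k => ProbabilityTheory.gaussianReal 0 1).map
    (fun x => ∑ i, (x i) ^ 2)

/-- Convergence in distribution: the CDFs converge at every continuity point of
the CDF of the limit law `μ`. -/
def TendstoInDist {Ω : ℕ → Type*} [∀ n, MeasurableSpace (Ω n)]
    (P : ∀ n, Measure (Ω n)) (X : ∀ n, Ω n → ℝ) (μ : Measure ℝ) : Prop :=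
  ∀ t : ℝ, ContinuousAt (fun s => (μ (Set.Iic s)).toReal) t →
    Tendsto (fun n => ((P n) {ω | X n ω ≤ t}).toReal) atTop
      (nhds ((μ (Set.Iic t)).toReal))

/-! If `S n > 1`, some `j ∈ [2, d]` beats `1`, i.e. `U n j - U n 1 > π j n - π 1 n`.
Convergence in distribution makes each `U · k` tight (the CDF of the limit has only countably
many discontinuities, so the tails can be cut at continuity points), hence a difference of two
of them exceeds a diverging threshold with vanishing probability. A union bound over the
finitely many `j` concludes. -/

open Set Topology
open scoped ENNReal

instance (k : ℕ) : IsProbabilityMeasure (chiSq k) :=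
  Measure.isProbabilityMeasure_map
    (by fun_prop : Measurable fun x : Fin k → ℝ => ∑ i, x i ^ 2).aemeasurable

lemma dense_continuousAt_measure_Iic (μ : Measure ℝ) [IsFiniteMeasure μ] :
    Dense {t | ContinuousAt (fun s => (μ (Iic s)).toReal) t} := by
  have hmono : Monotone fun s => (μ (Iic s)).toReal := fun a b hab =>
    ENNReal.toReal_mono (measure_ne_top μ _) (measure_mono (Iic_subset_Iic.2 hab))
  simpa only [compl_ofPred, not_not] using hmono.countable_not_continuousAt.dense_compl ℝ

lemma tendsto_measure_Iic_atBot (μ : Measure ℝ) [IsFiniteMeasure μ] :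
    Tendsto (fun t => μ (Iic t)) atBot (𝓝 0) := by
  have h := tendsto_measure_iInter_atBot (μ := μ) (fun _ => measurableSet_Iic.nullMeasurableSet)
    (fun _ _ h => Iic_subset_Iic.2 h) ⟨0, measure_ne_top μ _⟩
  have hempty : ⋂ t : ℝ, Iic t = ∅ := eq_empty_of_forall_notMem fun x hx =>
    (sub_one_lt x).not_ge (mem_iInter.1 hx (x - 1))
  rwa [hempty, measure_empty] at h

lemma tendsto_measure_Ioi_atTop (μ : Measure ℝ) [IsFiniteMeasure μ] :
    Tendsto (fun t => μ (Ioi t)) atTop (𝓝 0) := by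
  have h := tendsto_measure_iInter_atTop (μ := μ) (fun _ => measurableSet_Ioi.nullMeasurableSet)
    (fun _ _ h => Ioi_subset_Ioi h) ⟨0, measure_ne_top μ _⟩
  have hempty : ⋂ t : ℝ, Ioi t = ∅ := eq_empty_of_forall_notMem fun x hx =>
    lt_irrefl x (mem_iInter.1 hx x)
  rwa [hempty, measure_empty] at h

namespace TendstoInDist

variable {Ω : ℕ → Type*} [∀ n, MeasurableSpace (Ω n)] {P : ∀ n, Measure (Ω n)}
  {X : ∀ n, Ω n → ℝ} {μ : Measure ℝ} {t : ℝ}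

lemma tendsto_measure_le [∀ n, IsFiniteMeasure (P n)] [IsFiniteMeasure μ]
    (h : TendstoInDist P X μ) (ht : ContinuousAt (fun s => (μ (Iic s)).toReal) t) :
    Tendsto (fun n => P n {ω | X n ω ≤ t}) atTop (𝓝 (μ (Iic t))) :=
  (ENNReal.tendsto_toReal_iff (fun _ => measure_ne_top _ _) (measure_ne_top _ _)).1 (h t ht)

lemma tendsto_measure_gt [∀ n, IsProbabilityMeasure (P n)] [IsProbabilityMeasure μ]
    (hX : ∀ n, Measurable (X n)) (h : TendstoInDist P X μ)
    (ht : ContinuousAt (fun s => (μ (Iic s)).toReal) t) :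
    Tendsto (fun n => P n {ω | t < X n ω}) atTop (𝓝 (μ (Ioi t))) := by
  have hcompl : ∀ n, {ω | t < X n ω} = {ω | X n ω ≤ t}ᶜ := fun n => by ext; simp
  simp_rw [hcompl, prob_compl_eq_one_sub (measurableSet_le (hX _) measurable_const)]
  rw [← compl_Iic, prob_compl_eq_one_sub measurableSet_Iic]
  exact ENNReal.Tendsto.sub tendsto_const_nhds (h.tendsto_measure_le ht)
    (Or.inl ENNReal.one_ne_top)

lemma exists_eventually_measure_gt_lt [∀ n, IsProbabilityMeasure (P n)]
    [IsProbabilityMeasure μ] (hX : ∀ n, Measurable (X n)) (h : TendstoInDist P X μ)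
    {ε : ℝ≥0∞} (hε : 0 < ε) : ∃ t, ∀ᶠ n in atTop, P n {ω | t < X n ω} < ε := by
  obtain ⟨a, ha⟩ := eventually_atTop.1 ((tendsto_measure_Ioi_atTop μ).eventually (gt_mem_nhds hε))
  obtain ⟨t, ht, hat⟩ := (dense_continuousAt_measure_Iic μ).exists_gt a
  exact ⟨t, (h.tendsto_measure_gt hX ht).eventually (gt_mem_nhds (ha t hat.le))⟩

lemma exists_eventually_measure_le_lt [∀ n, IsFiniteMeasure (P n)] [IsFiniteMeasure μ]
    (h : TendstoInDist P X μ) {ε : ℝ≥0∞} (hε : 0 < ε) :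
    ∃ s, ∀ᶠ n in atTop, P n {ω | X n ω ≤ s} < ε := by
  obtain ⟨a, ha⟩ := eventually_atBot.1 ((tendsto_measure_Iic_atBot μ).eventually (gt_mem_nhds hε))
  obtain ⟨s, hs, hsa⟩ := (dense_continuousAt_measure_Iic μ).exists_lt a
  exact ⟨s, (h.tendsto_measure_le hs).eventually (gt_mem_nhds (ha s hsa.le))⟩

theorem tendsto_measure_lt_sub [∀ n, IsProbabilityMeasure (P n)] [IsProbabilityMeasure μ]
    {Y : ∀ n, Ω n → ℝ} {ν : Measure ℝ} [IsFiniteMeasure ν] (hX : ∀ n, Measurable (X n))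
    (hXμ : TendstoInDist P X μ) (hYν : TendstoInDist P Y ν) {c : ℕ → ℝ}
    (hc : Tendsto c atTop atTop) :
    Tendsto (fun n => P n {ω | c n < X n ω - Y n ω}) atTop (𝓝 0) := by
  refine ENNReal.tendsto_nhds_zero.2 fun ε hε => ?_
  obtain ⟨t, hXt⟩ := hXμ.exists_eventually_measure_gt_lt hX (ENNReal.half_pos hε.ne')
  obtain ⟨s, hYs⟩ := hYν.exists_eventually_measure_le_lt (ENNReal.half_pos hε.ne')
  filter_upwards [hXt, hYs, hc.eventually_ge_atTop (t - s)] with n hXn hYn hcn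
  calc P n {ω | c n < X n ω - Y n ω}
      ≤ P n ({ω | t < X n ω} ∪ {ω | Y n ω ≤ s}) := measure_mono fun ω hω => by
        by_contra! hω'
        simp only [mem_union, mem_ofPred_eq, not_or, not_lt] at hω hω'
        linarith
    _ ≤ P n {ω | t < X n ω} + P n {ω | Y n ω ≤ s} := measure_union_le _ _
    _ ≤ ε / 2 + ε / 2 := add_le_add hXn.le hYn.le
    _ = ε := ENNReal.add_halves ε

end TendstoInDist

lemma exists_lt_of_one_lt_sInf {β : Type*} [LinearOrder β] {d : ℕ} {f : ℕ → β}
    (h : 1 < sInf {k | 1 ≤ k ∧ k ≤ d ∧ ∀ j, 1 ≤ j → j ≤ d → f j ≤ f k}) :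
    ∃ j ∈ Finset.Icc 2 d, f 1 < f j := by
  -- `sInf ∅ = 0` in `ℕ`, so the set is nonempty; this gives `1 ≤ d`.
  obtain ⟨k, hk1, hkd, -⟩ := Nat.nonempty_of_pos_sInf (one_pos.trans h)
  have h1 : ¬ (1 ≤ 1 ∧ 1 ≤ d ∧ ∀ j, 1 ≤ j → j ≤ d → f j ≤ f 1) := fun h1 =>
    (Nat.sInf_le h1).not_gt h
  simp only [le_refl, true_and, not_and, not_forall, not_le] at h1
  obtain ⟨j, hj1, hjd, hlt⟩ := h1 (hk1.trans hkd)
  have hj : j ≠ 1 := by rintro rfl; exact lt_irrefl _ hlt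
  exact ⟨j, Finset.mem_Icc.2 ⟨by omega, hjd⟩, hlt⟩

theorem stmt3_general {Ω : ℕ → Type*} [∀ n, MeasurableSpace (Ω n)]
    (P : ∀ n, Measure (Ω n)) (hP : ∀ n, IsProbabilityMeasure (P n))
    (d : ℕ)
    (U : (n : ℕ) → ℕ → Ω n → ℝ) (hUmeas : ∀ n k, Measurable (U n k))
    (π : ℕ → ℕ → ℝ)
    (hπdiv : ∀ j, 2 ≤ j → j ≤ d → Tendsto (fun n => π j n - π 1 n) atTop atTop)
    (hU : ∀ k, 1 ≤ k → k ≤ d → TendstoInDist P (fun n => U n k) (chiSq k))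
    (S : (n : ℕ) → Ω n → ℕ)
    (hS : ∀ n ω, S n ω = sInf {k | 1 ≤ k ∧ k ≤ d ∧
      ∀ j, 1 ≤ j → j ≤ d → U n j ω - π j n ≤ U n k ω - π k n}) :
    Tendsto (fun n => ((P n) {ω | 1 < S n ω}).toReal) atTop (nhds 0) := by
  have := hP
  have hsub : ∀ n, {ω | 1 < S n ω} ⊆
      ⋃ j ∈ Finset.Icc 2 d, {ω | π j n - π 1 n < U n j ω - U n 1 ω} := fun n ω hω => by
    obtain ⟨j, hj, hlt⟩ :=
      exists_lt_of_one_lt_sInf (f := fun k => U n k ω - π k n) ((hS n ω).symm.trans_gt hω)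
    exact mem_biUnion hj (show π j n - π 1 n < U n j ω - U n 1 ω by linarith)
  have hterm : ∀ j ∈ Finset.Icc 2 d,
      Tendsto (fun n => P n {ω | π j n - π 1 n < U n j ω - U n 1 ω}) atTop (𝓝 0) := by
    intro j hj
    obtain ⟨hj2, hjd⟩ := Finset.mem_Icc.1 hj
    exact (hU j (by omega) hjd).tendsto_measure_lt_sub (hUmeas · j) (hU 1 le_rfl (by omega))
      (hπdiv j hj2 hjd)
  have hsum := tendsto_finsetSum _ hterm
  rw [Finset.sum_const_zero] at hsum
  rw [ENNReal.tendsto_toReal_zero_iff]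
  exact tendsto_of_tendsto_of_tendsto_of_le_of_le tendsto_const_nhds hsum (fun _ => zero_le)
    fun n => (measure_mono (hsub n)).trans (measure_biUnion_finset_le _ _)

theorem stmt3 {Ω : ℕ → Type*} [∀ n, MeasurableSpace (Ω n)]
    (P : ∀ n, Measure (Ω n)) (hP : ∀ n, IsProbabilityMeasure (P n))
    (d : ℕ) (hd : 1 ≤ d)
    (U : (n : ℕ) → ℕ → Ω n → ℝ) (hUmeas : ∀ n k, Measurable (U n k))
    (π : ℕ → ℕ → ℝ)
    (hπmono : ∀ n j l, 1 ≤ j → j < l → l ≤ d → π j n < π l n)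
    (hπdiv : ∀ j, 2 ≤ j → j ≤ d → Tendsto (fun n => π j n - π 1 n) atTop atTop)
    (hU : ∀ k, 1 ≤ k → k ≤ d → TendstoInDist P (fun n => U n k) (chiSq k))
    (S : (n : ℕ) → Ω n → ℕ)
    (hS : ∀ n ω, S n ω = sInf {k | 1 ≤ k ∧ k ≤ d ∧
      ∀ j, 1 ≤ j → j ≤ d → U n j ω - π j n ≤ U n k ω - π k n}) :
    Tendsto (fun n => ((P n) {ω | 1 < S n ω}).toReal) atTop (nhds 0) :=
  stmt3_general P hP d U hUmeas π hπdiv hU S hS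
end

section
/- Let Y_1, Y_2, ... be i.i.d. ℝ^k-valued random vectors with finite covariance, and suppose there is an index K ≤ k such that E[Y_{1,i}] = 0 for i = 1,...,K-1 and E[Y_{1,K}] = C_K ≠ 0. Let L be a k×k symmetric positive definite matrix. Then U_n = (n^{-1/2} Σ_{j=1}^n Y_j) L (n^{-1/2} Σ_{j=1}^n Y_j)ᵀ tends to infinity in probability: for every s ∈ ℝ, P(U_n ≤ s) → 0 as n → ∞. -/
/-!
By the strong law of large numbers the `K`-th coordinate of `n⁻¹ ∑ⱼ Yⱼ` converges almost surely
to `C ≠ 0`. Positive definiteness gives `δ > 0` with `δ x_K² ≤ xᵀ L x`, so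
`U n ≥ δ n (n⁻¹ ∑ⱼ Yⱼ,K)² → ∞` almost surely, and almost sure divergence to `+∞` forces
`P (U n ≤ s) → 0` by dominated convergence applied to the indicators of `{U n ≤ s}`.
-/

open MeasureTheory ProbabilityTheory Filter Matrix

namespace Matrix

variable {n : Type*} [Fintype n]

lemma smul_dotProduct_mulVec_smul (L : Matrix n n ℝ) (c : ℝ) (x : n → ℝ) :
    (c • x) ⬝ᵥ L *ᵥ (c • x) = c ^ 2 * (x ⬝ᵥ L *ᵥ x) := by
  simp only [mulVec_smul, smul_dotProduct, dotProduct_smul, smul_eq_mul]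
  ring

lemma mul_dotProduct_mulVec_mul (L : Matrix n n ℝ) (c : ℝ) (x : n → ℝ) :
    (fun i => c * x i) ⬝ᵥ L *ᵥ (fun i => c * x i) = c ^ 2 * (x ⬝ᵥ L *ᵥ x) :=
  smul_dotProduct_mulVec_smul L c x

lemma PosDef.exists_mul_norm_sq_le [Nonempty n] {L : Matrix n n ℝ} (hL : L.PosDef) :
    ∃ δ > 0, ∀ x : n → ℝ, δ * ‖x‖ ^ 2 ≤ x ⬝ᵥ L *ᵥ x := by
  have hcont : Continuous fun x : n → ℝ => x ⬝ᵥ L *ᵥ x := by fun_prop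
  have hsphere : (Metric.sphere (0 : n → ℝ) 1).Nonempty :=
    NormedSpace.sphere_nonempty.2 zero_le_one
  obtain ⟨z, hz, hmin⟩ := (isCompact_sphere (0 : n → ℝ) 1).exists_isMinOn hsphere hcont.continuousOn
  have hz0 : z ≠ 0 := ne_zero_of_mem_unit_sphere ⟨z, hz⟩
  refine ⟨z ⬝ᵥ L *ᵥ z, hL.dotProduct_mulVec_pos hz0, fun x => ?_⟩
  rcases eq_or_ne x 0 with rfl | hx
  · simp
  have hxn : ‖x‖ ≠ 0 := norm_ne_zero_iff.2 hx
  have hunit : ‖x‖⁻¹ • x ∈ Metric.sphere (0 : n → ℝ) 1 := by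
    rw [mem_sphere_zero_iff_norm, norm_smul, norm_inv, norm_norm, inv_mul_cancel₀ hxn]
  calc z ⬝ᵥ L *ᵥ z * ‖x‖ ^ 2
      ≤ (‖x‖⁻¹ • x) ⬝ᵥ L *ᵥ (‖x‖⁻¹ • x) * ‖x‖ ^ 2 := by gcongr; exact hmin hunit
    _ = x ⬝ᵥ L *ᵥ x := by
      rw [smul_dotProduct_mulVec_smul]
      field_simp

lemma PosDef.exists_mul_sq_apply_le {L : Matrix n n ℝ} (hL : L.PosDef) (K : n) :
    ∃ δ > 0, ∀ x : n → ℝ, δ * x K ^ 2 ≤ x ⬝ᵥ L *ᵥ x := by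
  have : Nonempty n := ⟨K⟩
  obtain ⟨δ, hδ, hle⟩ := hL.exists_mul_norm_sq_le
  refine ⟨δ, hδ, fun x => le_trans ?_ (hle x)⟩
  rw [← sq_abs]
  gcongr
  exact (Real.norm_eq_abs _ ▸ norm_le_pi_norm x K : |x K| ≤ ‖x‖)

end Matrix

lemma Measurable.dotProduct_mulVec_self {α n : Type*} [MeasurableSpace α] [Fintype n]
    {v : α → n → ℝ} (hv : Measurable v) (L : Matrix n n ℝ) :
    Measurable fun a => v a ⬝ᵥ L *ᵥ v a :=
  (show Continuous fun x : n → ℝ => x ⬝ᵥ L *ᵥ x by fun_prop).measurable.comp hv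

lemma Real.rpow_neg_one_half_sq {x : ℝ} (hx : 0 ≤ x) : (x ^ (-(1 : ℝ) / 2)) ^ 2 = x⁻¹ := by
  rw [← Real.rpow_natCast, ← Real.rpow_mul hx]
  norm_num
  exact Real.rpow_neg_one x

lemma tendsto_natCast_mul_sq_atTop {b : ℕ → ℝ} {C : ℝ} (hC : C ≠ 0)
    (hb : Tendsto b atTop (nhds C)) :
    Tendsto (fun n : ℕ => (n : ℝ) * b n ^ 2) atTop atTop :=
  tendsto_natCast_atTop_atTop.atTop_mul_pos (by positivity) (hb.pow 2)

namespace ProbabilityTheory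

variable {Ω E : Type*} [MeasurableSpace Ω] [MeasurableSpace E] {P : Measure Ω}

lemma strong_law_ae_comp {Y : ℕ → Ω → E} (hindep : Pairwise fun i j => IndepFun (Y i) (Y j) P)
    (hident : ∀ n, IdentDistrib (Y n) (Y 0) P P) {f : E → ℝ} (hf : Measurable f)
    (hint : Integrable (f ∘ Y 0) P) :
    ∀ᵐ ω ∂P, Tendsto (fun n : ℕ => (∑ j ∈ Finset.range n, f (Y j ω)) / n) atTop
      (nhds (∫ ω, f (Y 0 ω) ∂P)) :=
  strong_law_ae_real (fun n => f ∘ Y n) hint (fun _ _ hij => (hindep hij).comp hf hf)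
    fun n => (hident n).comp hf

end ProbabilityTheory

namespace MeasureTheory

lemma tendsto_measure_setOf_le_of_ae_tendsto_atTop {Ω ι : Type*} [MeasurableSpace Ω]
    {μ : Measure Ω} [IsFiniteMeasure μ] {l : Filter ι} [l.IsCountablyGenerated]
    {Z : ι → Ω → ℝ} (hZ : ∀ i, Measurable (Z i)) (h : ∀ᵐ ω ∂μ, Tendsto (Z · ω) l atTop)
    (s : ℝ) :
    Tendsto (fun i => μ {ω | Z i ω ≤ s}) l (nhds 0) := by
  have hlim : ∀ᵐ ω ∂μ, ∀ᶠ i in l, ω ∈ {ω | Z i ω ≤ s} ↔ ω ∈ (∅ : Set Ω) := by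
    filter_upwards [h] with ω hω
    filter_upwards [hω.eventually_gt_atTop s] with i hi
    simpa using hi
  simpa using tendsto_measure_of_ae_tendsto_indicator_of_isFiniteMeasure l
    MeasurableSet.empty (fun i => measurableSet_le (hZ i) measurable_const) hlim

end MeasureTheory

theorem stmt6_general {Ω : Type*} [MeasurableSpace Ω] (P : Measure Ω) [IsProbabilityMeasure P]
    (k : ℕ) (Y : ℕ → Ω → (Fin k → ℝ))
    (hmeas : ∀ n, Measurable (Y n))
    (hindep : iIndepFun Y P)
    (hident : ∀ n, P.map (Y n) = P.map (Y 0))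
    (hintegrable : ∀ i, Integrable (fun ω => Y 0 ω i) P)
    (K : Fin k)
    (C : ℝ) (hC : C ≠ 0) (hK : ∫ ω, Y 0 ω K ∂P = C)
    (L : Matrix (Fin k) (Fin k) ℝ) (hL : L.PosDef)
    (U : ℕ → Ω → ℝ)
    (hU : ∀ n ω, U n ω =
      (fun i => ((n : ℝ)) ^ (-(1 : ℝ)/2) * ∑ j ∈ Finset.range n, Y j ω i) ⬝ᵥ
        L.mulVec (fun i => ((n : ℝ)) ^ (-(1 : ℝ)/2) * ∑ j ∈ Finset.range n, Y j ω i)) :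
    ∀ s : ℝ, Tendsto (fun n => (P {ω | U n ω ≤ s}).toReal) atTop (nhds 0) := by
  intro s
  obtain ⟨δ, hδ, hquad⟩ := hL.exists_mul_sq_apply_le K
  have hlln : ∀ᵐ ω ∂P,
      Tendsto (fun n : ℕ => (∑ j ∈ Finset.range n, Y j ω K) / n) atTop (nhds C) := by
    rw [← hK]
    exact strong_law_ae_comp (f := fun v => v K) (fun _ _ hij => hindep.indepFun hij)
      (fun n => ⟨(hmeas n).aemeasurable, (hmeas 0).aemeasurable, hident n⟩)
      (measurable_pi_apply K) (hintegrable K)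
  have hU_meas : ∀ n, Measurable (U n) := fun n => by
    rw [funext (hU n)]
    exact (measurable_pi_lambda _ fun i => by fun_prop).dotProduct_mulVec_self L
  have hU_ge : ∀ n ω, δ * (n * ((∑ j ∈ Finset.range n, Y j ω K) / n) ^ 2) ≤ U n ω := by
    intro n ω
    rw [hU n ω, mul_dotProduct_mulVec_mul, Real.rpow_neg_one_half_sq n.cast_nonneg]
    calc δ * (n * ((∑ j ∈ Finset.range n, Y j ω K) / n) ^ 2)
        = (n : ℝ)⁻¹ * (δ * (∑ j ∈ Finset.range n, Y j ω K) ^ 2) := by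
          rcases eq_or_ne (n : ℝ) 0 with hn | hn
          · simp [hn]
          · field_simp
      _ ≤ _ := by gcongr; exact hquad fun i => ∑ j ∈ Finset.range n, Y j ω i
  have hU_top : ∀ᵐ ω ∂P, Tendsto (U · ω) atTop atTop := by
    filter_upwards [hlln] with ω hω
    exact tendsto_atTop_mono (hU_ge · ω) ((tendsto_natCast_mul_sq_atTop hC hω).const_mul_atTop hδ)
  rw [← ENNReal.toReal_zero]
  exact (ENNReal.tendsto_toReal ENNReal.zero_ne_top).comp
    (tendsto_measure_setOf_le_of_ae_tendsto_atTop hU_meas hU_top s)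

theorem stmt6 {Ω : Type*} [MeasurableSpace Ω] (P : Measure Ω) [IsProbabilityMeasure P]
    (k : ℕ) (Y : ℕ → Ω → (Fin k → ℝ))
    (hmeas : ∀ n, Measurable (Y n))
    (hindep : iIndepFun Y P)
    (hident : ∀ n, P.map (Y n) = P.map (Y 0))
    (hintegrable : ∀ i, Integrable (fun ω => Y 0 ω i) P)
    (hcov : ∀ i j, Integrable (fun ω => Y 0 ω i * Y 0 ω j) P)
    (K : Fin k)
    (hzero : ∀ i, i < K → ∫ ω, Y 0 ω i ∂P = 0)
    (C : ℝ) (hC : C ≠ 0) (hK : ∫ ω, Y 0 ω K ∂P = C)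
    (L : Matrix (Fin k) (Fin k) ℝ) (hL : L.PosDef)
    (U : ℕ → Ω → ℝ)
    (hU : ∀ n ω, U n ω =
      (fun i => ((n : ℝ)) ^ (-(1 : ℝ)/2) * ∑ j ∈ Finset.range n, Y j ω i) ⬝ᵥ
        L.mulVec (fun i => ((n : ℝ)) ^ (-(1 : ℝ)/2) * ∑ j ∈ Finset.range n, Y j ω i)) :
    ∀ s : ℝ, Tendsto (fun n => (P {ω | U n ω ≤ s}).toReal) atTop (nhds 0) :=
  stmt6_general P k Y hmeas hindep hident hintegrable K C hC hK L hL U hU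
end

section
/- Consider random variables U_1^{(n)}, ..., U_d^{(n)} with U_i^{(n)} ≥ U_j^{(n)} whenever i ≥ j (each U being a nonneg. increasing quadratic-form sequence), penalties π with π(K,n) - π(i,n) = o(n) for all i < K ≤ d, and suppose: (a) for each i < K, U_i^{(n)} converges in distribution to χ²_i; (b) there exists c > 0 with P(U_K^{(n)} ≥ c n) → 1. Define S_n = min{k ≤ d : U_k^{(n)} - π(k,n) ≥ U_j^{(n)} - π(j,n) for all j ≤ d}. Then P(S_n ≥ K) → 1 and U_{S_n}^{(n)} → ∞ in probability as n → ∞. -/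
open MeasureTheory Filter

/-! Each `U_i` with `i < K` is tight, whereas `U_K` grows linearly and the penalty gap
`π K - π i` is `o(n)`; so with probability tending to one the penalized score at `K` beats that
at every `i < K`, forcing `S_n ≥ K`, and then `U_{S_n} ≥ U_K ≥ c n` by monotonicity. -/

open ProbabilityTheory Set

instance isProbabilityMeasure_chiSq (k : ℕ) : IsProbabilityMeasure (chiSq k) :=
  Measure.isProbabilityMeasure_map
    (by fun_prop : Measurable fun x : Fin k → ℝ => ∑ i, x i ^ 2).aemeasurable

lemma exists_continuousAt_cdf_gt (μ : Measure ℝ) [IsProbabilityMeasure μ] {a : ℝ} (ha : a < 1) :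
    ∃ t, ContinuousAt (cdf μ) t ∧ a < cdf μ t := by
  obtain ⟨T, hT⟩ :=
    ((tendsto_cdf_atTop μ).eventually (eventually_gt_nhds ha)).exists_forall_of_atTop
  obtain ⟨t, ht, hTt⟩ := ((monotone_cdf μ).countable_not_continuousAt.dense_compl ℝ).exists_mem_open
    isOpen_Ioi (nonempty_Ioi (a := T))
  exact ⟨t, not_not.mp ht, hT t hTt.le⟩

lemma tendsto_const_mul_sub_atTop {c : ℝ} (hc : 0 < c) {r : ℕ → ℝ}
    (hr : Tendsto (fun n => r n / n) atTop (nhds 0)) :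
    Tendsto (fun n : ℕ => c * n - r n) atTop atTop := by
  have h : Tendsto (fun n : ℕ => (c - r n / n) * n) atTop atTop :=
    (by simpa using tendsto_const_nhds.sub hr : Tendsto (fun n : ℕ => c - r n / n) atTop (nhds c))
      |>.pos_mul_atTop hc tendsto_natCast_atTop_atTop
  refine h.congr' ?_
  filter_upwards [eventually_ne_atTop 0] with n hn
  field_simp

section SequenceOfProbabilitySpaces

variable {Ω : ℕ → Type*} [∀ n, MeasurableSpace (Ω n)] {P : ∀ n, Measure (Ω n)}

lemma TendstoInDist.tendsto_measureReal_le_zero [∀ n, IsProbabilityMeasure (P n)]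
    {X : ∀ n, Ω n → ℝ} {μ : Measure ℝ} [IsProbabilityMeasure μ] (hdist : TendstoInDist P X μ)
    (hX : ∀ n, Measurable (X n)) {M : ℕ → ℝ} (hM : Tendsto M atTop atTop) :
    Tendsto (fun n => (P n).real {ω | M n ≤ X n ω}) atTop (nhds 0) := by
  have hcdf : (fun s => (μ (Iic s)).toReal) = cdf μ := funext fun s => (cdf_eq_real μ s).symm
  refine tendsto_order.2 ⟨fun a ha => .of_forall fun n => ha.trans_le measureReal_nonneg,
    fun ε hε => ?_⟩
  obtain ⟨t, ht, hFt⟩ := exists_continuousAt_cdf_gt μ (sub_lt_self 1 hε)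
  have hconv := hdist t (hcdf ▸ ht)
  rw [← measureReal_def, ← cdf_eq_real] at hconv
  filter_upwards [hconv.eventually (eventually_gt_nhds hFt), hM.eventually_gt_atTop t]
    with n hn hMn
  calc (P n).real {ω | M n ≤ X n ω}
      ≤ (P n).real {ω | X n ω ≤ t}ᶜ := measureReal_mono fun ω hω => not_le.2 (hMn.trans_le hω)
    _ = 1 - (P n).real {ω | X n ω ≤ t} := probReal_compl_eq_one_sub (hX n measurableSet_Iic)
    _ < ε := by rw [measureReal_def]; linarith

lemma tendsto_measureReal_compl_zero [∀ n, IsProbabilityMeasure (P n)] {A : ∀ n, Set (Ω n)}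
    (hA : ∀ n, MeasurableSet (A n)) (h : Tendsto (fun n => (P n).real (A n)) atTop (nhds 1)) :
    Tendsto (fun n => (P n).real (A n)ᶜ) atTop (nhds 0) := by
  simpa [probReal_compl_eq_one_sub (hA _)] using (tendsto_const_nhds (x := (1 : ℝ))).sub h

lemma tendsto_measureReal_one_of_compl_subset [∀ n, IsProbabilityMeasure (P n)]
    {A B : ∀ n, Set (Ω n)} (hAB : ∀ n, (A n)ᶜ ⊆ B n)
    (hB : Tendsto (fun n => (P n).real (B n)) atTop (nhds 0)) :
    Tendsto (fun n => (P n).real (A n)) atTop (nhds 1) := by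
  refine tendsto_of_tendsto_of_tendsto_of_le_of_le
    (by simpa using (tendsto_const_nhds (x := (1 : ℝ))).sub hB) tendsto_const_nhds
    (fun n => ?_) fun n => measureReal_le_one
  have hcover : 1 ≤ (P n).real (A n) + (P n).real (B n) :=
    calc 1 = (P n).real (A n ∪ (A n)ᶜ) := by rw [union_compl_self, probReal_univ]
      _ ≤ (P n).real (A n) + (P n).real (A n)ᶜ := measureReal_union_le _ _
      _ ≤ (P n).real (A n) + (P n).real (B n) := add_le_add_right (measureReal_mono (hAB n)) _
  linarith

lemma tendsto_measureReal_zero_of_subset_union [∀ n, IsFiniteMeasure (P n)]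
    {A B C : ∀ n, Set (Ω n)} (hABC : ∀ᶠ n in atTop, A n ⊆ B n ∪ C n)
    (hB : Tendsto (fun n => (P n).real (B n)) atTop (nhds 0))
    (hC : Tendsto (fun n => (P n).real (C n)) atTop (nhds 0)) :
    Tendsto (fun n => (P n).real (A n)) atTop (nhds 0) := by
  refine squeeze_zero' (.of_forall fun n => measureReal_nonneg) ?_ (by simpa using hB.add hC)
  filter_upwards [hABC] with n hn
  exact (measureReal_mono hn).trans (measureReal_union_le _ _)

lemma tendsto_measureReal_zero_of_subset_biUnion [∀ n, IsFiniteMeasure (P n)] {ι : Type*}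
    (s : Finset ι) {A : ∀ n, Set (Ω n)} {B : ι → ∀ n, Set (Ω n)}
    (hAB : ∀ n, A n ⊆ ⋃ i ∈ s, B i n)
    (hB : ∀ i ∈ s, Tendsto (fun n => (P n).real (B i n)) atTop (nhds 0)) :
    Tendsto (fun n => (P n).real (A n)) atTop (nhds 0) := by
  refine squeeze_zero (fun n => measureReal_nonneg)
    (fun n => (measureReal_mono (hAB n) (measure_ne_top _ _)).trans
      (measureReal_biUnion_finset_le s _)) ?_
  simpa using tendsto_finsetSum s hB

/-- On `{c n ≤ Z_n}` the event forces `Y_n ≥ c n - (a n - b n) → ∞`, which tightness excludes. -/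
lemma TendstoInDist.tendsto_measureReal_sub_le_sub_zero [∀ n, IsProbabilityMeasure (P n)]
    {Y Z : ∀ n, Ω n → ℝ} {μ : Measure ℝ} [IsProbabilityMeasure μ] (hY : TendstoInDist P Y μ)
    (hYm : ∀ n, Measurable (Y n)) {c : ℝ} (hc : 0 < c)
    (hZ : Tendsto (fun n => (P n).real {ω | c * n ≤ Z n ω}ᶜ) atTop (nhds 0)) {a b : ℕ → ℝ}
    (hab : Tendsto (fun n => (a n - b n) / n) atTop (nhds 0)) :
    Tendsto (fun n => (P n).real {ω | Z n ω - a n ≤ Y n ω - b n}) atTop (nhds 0) := by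
  refine tendsto_measureReal_zero_of_subset_union (.of_forall fun n ω hω => ?_) hZ
    (hY.tendsto_measureReal_le_zero hYm (tendsto_const_mul_sub_atTop hc hab))
  by_cases hZω : c * n ≤ Z n ω
  · right
    simp only [mem_ofPred_eq] at hω hZω ⊢
    linarith
  · exact Or.inl hZω

end SequenceOfProbabilitySpaces

lemma sInf_argmax_mem {β : Type*} [LinearOrder β] (f : ℕ → β) {d : ℕ} (hd : 1 ≤ d) :
    sInf {k | 1 ≤ k ∧ k ≤ d ∧ ∀ j, 1 ≤ j → j ≤ d → f j ≤ f k} ∈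
      {k | 1 ≤ k ∧ k ≤ d ∧ ∀ j, 1 ≤ j → j ≤ d → f j ≤ f k} := by
  obtain ⟨k, hk, hmax⟩ := Finset.exists_max_image (Finset.Icc 1 d) f ⟨1, by simp [hd]⟩
  rw [Finset.mem_Icc] at hk
  exact Nat.sInf_mem ⟨k, hk.1, hk.2, fun j hj hjd => hmax j (Finset.mem_Icc.2 ⟨hj, hjd⟩)⟩

theorem stmt8_general {Ω : ℕ → Type*} [∀ n, MeasurableSpace (Ω n)]
    (P : ∀ n, Measure (Ω n)) (hP : ∀ n, IsProbabilityMeasure (P n))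
    (d K : ℕ) (hK1 : 1 ≤ K) (hKd : K ≤ d)
    (U : (n : ℕ) → ℕ → Ω n → ℝ) (hUmeas : ∀ n k, Measurable (U n k))
    (hUmono : ∀ n ω i j, 1 ≤ i → i ≤ j → j ≤ d → U n i ω ≤ U n j ω)
    (π : ℕ → ℕ → ℝ)
    (hπo : ∀ i, 1 ≤ i → i < K →
      Tendsto (fun n => (π K n - π i n) / (n : ℝ)) atTop (nhds 0))
    (hUdist : ∀ i, 1 ≤ i → i < K → TendstoInDist P (fun n => U n i) (chiSq i))
    (hUK : ∃ c > (0 : ℝ),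
      Tendsto (fun n => ((P n) {ω | c * n ≤ U n K ω}).toReal) atTop (nhds 1))
    (S : (n : ℕ) → Ω n → ℕ)
    (hS : ∀ n ω, S n ω = sInf {k | 1 ≤ k ∧ k ≤ d ∧
      ∀ j, 1 ≤ j → j ≤ d → U n j ω - π j n ≤ U n k ω - π k n}) :
    Tendsto (fun n => ((P n) {ω | K ≤ S n ω}).toReal) atTop (nhds 1) ∧
      ∀ t : ℝ, Tendsto (fun n => ((P n) {ω | U n (S n ω) ω ≤ t}).toReal) atTop (nhds 0) := by
  obtain ⟨c, hc, hUK⟩ := hUK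
  have hSmax (n : ℕ) (ω : Ω n) : 1 ≤ S n ω ∧ S n ω ≤ d ∧
      ∀ j, 1 ≤ j → j ≤ d → U n j ω - π j n ≤ U n (S n ω) ω - π (S n ω) n :=
    hS n ω ▸ sInf_argmax_mem (fun k => U n k ω - π k n) (hK1.trans hKd)
  have hsmall : Tendsto (fun n => (P n).real {ω | c * n ≤ U n K ω}ᶜ) atTop (nhds 0) :=
    tendsto_measureReal_compl_zero (fun n => hUmeas n K measurableSet_Ici) hUK
  have hunder : Tendsto (fun n => (P n).real {ω | S n ω < K}) atTop (nhds 0) :=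
    tendsto_measureReal_zero_of_subset_biUnion (Finset.Ico 1 K)
      (fun n ω hω => mem_biUnion (Finset.mem_Ico.2 ⟨(hSmax n ω).1, hω⟩)
        ((hSmax n ω).2.2 K hK1 hKd))
      fun i hi => by
        obtain ⟨hi1, hiK⟩ := Finset.mem_Ico.1 hi
        exact (hUdist i hi1 hiK).tendsto_measureReal_sub_le_sub_zero (fun n => hUmeas n i) hc
          hsmall (hπo i hi1 hiK)
  refine ⟨tendsto_measureReal_one_of_compl_subset (A := fun n => {ω | K ≤ S n ω})
      (fun n ω (hω : ¬K ≤ S n ω) => not_le.1 hω) hunder,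
    fun t => tendsto_measureReal_zero_of_subset_union ?_ hunder hsmall⟩
  filter_upwards [(tendsto_natCast_atTop_atTop.const_mul_atTop hc).eventually_gt_atTop t]
    with n hn ω hω
  by_cases hSK : S n ω < K
  · exact Or.inl hSK
  · right
    simp only [mem_compl_iff, mem_ofPred_eq, not_le, not_lt] at hω hSK ⊢
    linarith [hUmono n ω K (S n ω) hK1 hSK (hSmax n ω).2.1]

theorem stmt8 {Ω : ℕ → Type*} [∀ n, MeasurableSpace (Ω n)]
    (P : ∀ n, Measure (Ω n)) (hP : ∀ n, IsProbabilityMeasure (P n))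
    (d K : ℕ) (hK1 : 1 ≤ K) (hKd : K ≤ d)
    (U : (n : ℕ) → ℕ → Ω n → ℝ) (hUmeas : ∀ n k, Measurable (U n k))
    (hUnonneg : ∀ n k ω, 1 ≤ k → k ≤ d → 0 ≤ U n k ω)
    (hUmono : ∀ n ω i j, 1 ≤ i → i ≤ j → j ≤ d → U n i ω ≤ U n j ω)
    (π : ℕ → ℕ → ℝ)
    (hπmono : ∀ n j l, 1 ≤ j → j < l → l ≤ d → π j n < π l n)
    (hπo : ∀ i, 1 ≤ i → i < K →
      Tendsto (fun n => (π K n - π i n) / (n : ℝ)) atTop (nhds 0))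
    (hUdist : ∀ i, 1 ≤ i → i < K → TendstoInDist P (fun n => U n i) (chiSq i))
    (hUK : ∃ c > (0 : ℝ),
      Tendsto (fun n => ((P n) {ω | c * n ≤ U n K ω}).toReal) atTop (nhds 1))
    (S : (n : ℕ) → Ω n → ℕ) (hSmeas : ∀ n, Measurable (S n))
    (hS : ∀ n ω, S n ω = sInf {k | 1 ≤ k ∧ k ≤ d ∧
      ∀ j, 1 ≤ j → j ≤ d → U n j ω - π j n ≤ U n k ω - π k n}) :
    Tendsto (fun n => ((P n) {ω | K ≤ S n ω}).toReal) atTop (nhds 1) ∧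
      ∀ t : ℝ, Tendsto (fun n => ((P n) {ω | U n (S n ω) ω ≤ t}).toReal) atTop (nhds 0) :=
  stmt8_general P hP d K hK1 hKd U hUmeas hUmono π hπo hUdist hUK S hS
end

section
/- Let Y_1, Y_2, ... be i.i.d. real random variables with mean θ_0 and finite variance. Let θ̂_n be a √n-consistent estimator of θ_0 and let C_1, C_2 be real constants. Define l_j* = C_1 (Y_j - θ̂_n)² - C_2 and l*(Y_j) = C_1 (Y_j - θ_0)² - C_2. Then n^{-1/2} |Σ_{j=1}^n (l_j* - l*(Y_j))| → 0 in probability as n → ∞, using the bound n^{-1/2}|Σ_j(l_j* - l*(Y_j))| ≤ |C_1| √n |θ̂_n - θ_0| (|Ȳ_n - θ̂_n| + |Ȳ_n - θ_0|). -/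
/-!
Summing `(y - a)² - (y - b)² = (a - b)(a + b - 2y)` over `j < n` gives
`n^{-1/2} Σ_j (l_j* - l*(Y_j)) = C₁ · √n (θ̂ₙ - θ₀) · (θ̂ₙ + θ₀ - 2Ȳₙ)`.
The first factor is bounded in probability by `√n`-consistency; the second tends to `0` in
probability, since `θ̂ₙ → θ₀` (again by `√n`-consistency) and `Ȳₙ → θ₀` (strong law of large
numbers). A product of a sequence bounded in probability and one tending to `0` in probability
tends to `0` in probability.
-/

open MeasureTheory ProbabilityTheory Filter

theorem inv_sqrt_mul_abs_sum_sq_sub_sq (n : ℕ) (c d a b : ℝ) (y : ℕ → ℝ) :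
    (Real.sqrt n)⁻¹ * |∑ j ∈ Finset.range n, ((c * (y j - a) ^ 2 - d) - (c * (y j - b) ^ 2 - d))|
      = |c * (Real.sqrt n * (a - b)) * (a + b - 2 * ((∑ j ∈ Finset.range n, y j) / n))| := by
  rcases Nat.eq_zero_or_pos n with rfl | hn
  · simp
  set S := ∑ j ∈ Finset.range n, y j
  have hs : Real.sqrt n * Real.sqrt n = n := Real.mul_self_sqrt n.cast_nonneg
  have hS : (n : ℝ) * (S / n) = S := mul_div_cancel₀ S (by positivity)
  have hsum : ∑ j ∈ Finset.range n, ((c * (y j - a) ^ 2 - d) - (c * (y j - b) ^ 2 - d))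
      = Real.sqrt n * (c * (Real.sqrt n * (a - b)) * (a + b - 2 * (S / n))) := by
    rw [Finset.sum_congr rfl fun j _ => (by ring : (c * (y j - a) ^ 2 - d) - (c * (y j - b) ^ 2 - d)
      = c * (a - b) * (a + b) - 2 * c * (a - b) * y j), Finset.sum_sub_distrib,
      Finset.sum_const, Finset.card_range, nsmul_eq_mul, ← Finset.mul_sum]
    linear_combination (2 * c * (a - b) * (S / n) - c * (a - b) * (a + b)) * hs
      + 2 * c * (a - b) * hS
  rw [hsum, abs_mul, abs_of_nonneg (Real.sqrt_nonneg _), inv_mul_cancel_left₀ (by positivity)]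

namespace MeasureTheory

variable {Ω ι : Type*} {m : MeasurableSpace Ω} {μ : Measure Ω} {l : Filter ι}

theorem TendstoInMeasure.sub {E : Type*} [SeminormedAddCommGroup E] {f f' : ι → Ω → E}
    {g g' : Ω → E} (hf : TendstoInMeasure μ f l g) (hf' : TendstoInMeasure μ f' l g') :
    TendstoInMeasure μ (fun i => f i - f' i) l (g - g') := by
  rw [tendstoInMeasure_iff_norm] at hf hf' ⊢
  intro ε hε
  have hsum := (hf (ε / 2) (half_pos hε)).add (hf' (ε / 2) (half_pos hε))
  rw [add_zero] at hsum
  refine tendsto_of_tendsto_of_tendsto_of_le_of_le tendsto_const_nhds hsum (fun _ => zero_le)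
    fun i => (measure_mono fun ω hω => ?_).trans (measure_union_le _ _)
  simp only [Set.mem_union, Set.mem_ofPred_eq, Pi.sub_apply] at hω ⊢
  by_contra! h
  rw [show f i ω - f' i ω - (g ω - g' ω) = (f i ω - g ω) - (f' i ω - g' ω) by abel] at hω
  linarith [norm_sub_le (f i ω - g ω) (f' i ω - g' ω)]

def BoundedInProbability (μ : Measure Ω) (l : Filter ι) (X : ι → Ω → ℝ) : Prop :=
  ∀ δ > (0 : ℝ), ∃ M : ℝ, ∀ᶠ i in l, μ.real {ω | M < |X i ω|} < δ

variable [IsFiniteMeasure μ]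

theorem BoundedInProbability.const_mul {X : ι → Ω → ℝ} (hX : BoundedInProbability μ l X)
    (c : ℝ) : BoundedInProbability μ l (fun i ω => c * X i ω) := by
  intro δ hδ
  obtain ⟨M, hM⟩ := hX δ hδ
  refine ⟨|c| * M, hM.mono fun i hi => lt_of_le_of_lt (measureReal_mono fun ω hω => ?_) hi⟩
  simp only [Set.mem_ofPred_eq, abs_mul] at hω ⊢
  exact lt_of_mul_lt_mul_left hω (abs_nonneg c)

theorem tendstoInMeasure_zero_of_boundedInProbability_mul {c : ι → ℝ} {X : ι → Ω → ℝ}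
    (hcX : BoundedInProbability μ l (fun i ω => c i * X i ω)) (hc : Tendsto c l atTop) :
    TendstoInMeasure μ X l 0 := by
  rw [tendstoInMeasure_iff_measureReal_norm]
  intro ε hε
  refine tendsto_order.2 ⟨fun a ha => .of_forall fun i => ha.trans_le measureReal_nonneg,
    fun δ hδ => ?_⟩
  obtain ⟨M, hM⟩ := hcX δ hδ
  filter_upwards [hM, hc.eventually_ge_atTop 0, (hc.atTop_mul_const hε).eventually_gt_atTop M]
    with i hi hc0 hcM
  refine lt_of_le_of_lt (measureReal_mono fun ω hω => ?_) hi
  simp only [Set.mem_ofPred_eq, Pi.zero_apply, sub_zero, Real.norm_eq_abs, abs_mul,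
    abs_of_nonneg hc0] at hω ⊢
  exact hcM.trans_le (mul_le_mul_of_nonneg_left hω hc0)

theorem BoundedInProbability.tendstoInMeasure_mul {X Z : ι → Ω → ℝ}
    (hX : BoundedInProbability μ l X) (hZ : TendstoInMeasure μ Z l 0) :
    TendstoInMeasure μ (fun i ω => X i ω * Z i ω) l 0 := by
  rw [tendstoInMeasure_iff_measureReal_norm] at hZ ⊢
  intro ε hε
  refine tendsto_order.2 ⟨fun a ha => .of_forall fun i => ha.trans_le measureReal_nonneg,
    fun δ hδ => ?_⟩
  obtain ⟨M, hM⟩ := hX (δ / 2) (half_pos hδ)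
  have hK : 0 < max M 1 := lt_max_of_lt_right one_pos
  filter_upwards [hM, (hZ _ (div_pos hε hK)).eventually_lt_const (half_pos hδ)] with i hXi hZi
  calc μ.real {ω | ε ≤ ‖X i ω * Z i ω - (0 : Ω → ℝ) ω‖}
      ≤ μ.real ({ω | M < |X i ω|} ∪ {ω | ε / max M 1 ≤ ‖Z i ω - (0 : Ω → ℝ) ω‖}) := by
        refine measureReal_mono fun ω hω => ?_
        simp only [Set.mem_union, Set.mem_ofPred_eq, Pi.zero_apply, sub_zero, Real.norm_eq_abs,
          abs_mul] at hω ⊢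
        by_contra! h
        have hXK : |X i ω| * |Z i ω| ≤ max M 1 * |Z i ω| :=
          mul_le_mul_of_nonneg_right (h.1.trans (le_max_left M 1)) (abs_nonneg _)
        linarith [(lt_div_iff₀' hK).1 h.2]
    _ ≤ _ := measureReal_union_le _ _
    _ < δ / 2 + δ / 2 := add_lt_add hXi hZi
    _ = δ := add_halves δ

end MeasureTheory

namespace ProbabilityTheory

theorem tendstoInMeasure_average_sub_integral {Ω : Type*} {m : MeasurableSpace Ω}
    {μ : Measure Ω} [IsFiniteMeasure μ] (X : ℕ → Ω → ℝ) (hint : Integrable (X 0) μ)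
    (hindep : Pairwise fun i j => X i ⟂ᵢ[μ] X j) (hident : ∀ i, IdentDistrib (X i) (X 0) μ μ) :
    TendstoInMeasure μ (fun n ω => (∑ i ∈ Finset.range n, X i ω) / n - μ[X 0]) atTop 0 := by
  refine tendstoInMeasure_of_tendsto_ae (fun n => ?_) ?_
  · exact (((Finset.aemeasurable_fun_sum _ fun i _ => (hident i).aemeasurable_fst).div_const _
      ).sub_const _).aestronglyMeasurable
  · filter_upwards [strong_law_ae_real X hint hindep hident] with ω hω
    exact tendsto_sub_nhds_zero_iff.2 hω

end ProbabilityTheory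

theorem stmt15_general {Ω : Type*} [MeasurableSpace Ω] (P : Measure Ω) [IsProbabilityMeasure P]
    (Y : ℕ → Ω → ℝ) (hmeas : ∀ n, Measurable (Y n))
    (hindep : iIndepFun Y P)
    (hident : ∀ n, P.map (Y n) = P.map (Y 0))
    (θ0 : ℝ)
    (hint : Integrable (Y 0) P) (hmean : ∫ ω, Y 0 ω ∂P = θ0)
    (C1 C2 : ℝ)
    (θhat : ℕ → Ω → ℝ)
    (htight : ∀ ε > (0 : ℝ), ∃ M : ℝ, ∀ᶠ n : ℕ in atTop,
      (P {ω | M < Real.sqrt n * |θhat n ω - θ0|}).toReal < ε) :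
    ∀ ε > (0 : ℝ),
      Tendsto (fun n : ℕ => (P {ω | ε ≤ (Real.sqrt n)⁻¹ *
        |∑ j ∈ Finset.range n, ((C1 * (Y j ω - θhat n ω) ^ 2 - C2)
          - (C1 * (Y j ω - θ0) ^ 2 - C2))|}).toReal)
        atTop (nhds 0) := by
  have hbdd : BoundedInProbability P atTop fun (n : ℕ) ω => Real.sqrt n * (θhat n ω - θ0) := by
    simpa only [BoundedInProbability, measureReal_def, abs_mul,
      abs_of_nonneg (Real.sqrt_nonneg _)] using htight
  have hθ : TendstoInMeasure P (fun n ω => θhat n ω - θ0) atTop 0 :=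
    tendstoInMeasure_zero_of_boundedInProbability_mul hbdd
      (Real.tendsto_sqrt_atTop.comp tendsto_natCast_atTop_atTop)
  have hY : TendstoInMeasure P (fun n ω => (∑ i ∈ Finset.range n, Y i ω) / n - θ0) atTop 0 := by
    simpa only [← hmean] using tendstoInMeasure_average_sub_integral Y hint
      (fun i j hij => hindep.indepFun hij)
      (fun i => ⟨(hmeas i).aemeasurable, (hmeas 0).aemeasurable, hident i⟩)
  have hW : TendstoInMeasure P (fun n ω => (θhat n ω - θ0)
      - ((∑ i ∈ Finset.range n, Y i ω) / n - θ0) - ((∑ i ∈ Finset.range n, Y i ω) / n - θ0))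
      atTop (0 - 0 - 0) := (hθ.sub hY).sub hY
  rw [sub_zero, sub_zero] at hW
  have hprod := (hbdd.const_mul C1).tendstoInMeasure_mul hW
  intro ε hε
  have h := tendstoInMeasure_iff_measureReal_norm.1 hprod ε hε
  simp only [measureReal_def, Pi.zero_apply, sub_zero, Real.norm_eq_abs] at h
  convert h using 5 with n
  funext ω
  rw [inv_sqrt_mul_abs_sum_sq_sub_sq n C1 C2 _ _ (Y · ω)]
  congr 3
  ring

theorem stmt15 {Ω : Type*} [MeasurableSpace Ω] (P : Measure Ω) [IsProbabilityMeasure P]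
    (Y : ℕ → Ω → ℝ) (hmeas : ∀ n, Measurable (Y n))
    (hindep : iIndepFun Y P)
    (hident : ∀ n, P.map (Y n) = P.map (Y 0))
    (θ0 : ℝ)
    (hint : Integrable (Y 0) P) (hmean : ∫ ω, Y 0 ω ∂P = θ0)
    (hint2 : Integrable (fun ω => (Y 0 ω) ^ 2) P)
    (C1 C2 : ℝ)
    (θhat : ℕ → Ω → ℝ) (hθmeas : ∀ n, Measurable (θhat n))
    (htight : ∀ ε > (0 : ℝ), ∃ M : ℝ, ∀ᶠ n : ℕ in atTop,
      (P {ω | M < Real.sqrt n * |θhat n ω - θ0|}).toReal < ε) :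
    ∀ ε > (0 : ℝ),
      Tendsto (fun n : ℕ => (P {ω | ε ≤ (Real.sqrt n)⁻¹ *
        |∑ j ∈ Finset.range n, ((C1 * (Y j ω - θhat n ω) ^ 2 - C2)
          - (C1 * (Y j ω - θ0) ^ 2 - C2))|}).toReal)
        atTop (nhds 0) :=
  stmt15_general P Y hmeas hindep hident θ0 hint hmean C1 C2 θhat htight
end
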